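/- Let k(ρ) be the largest integer k for which g ↦ (trace ρ(g))/2 mod π^k is a multiplicative character of G, and suppose n(ρ) is finite. If m(ρ) ≠ n(ρ) then k(ρ) = 2·m(ρ), and if m(ρ) = n(ρ) then k(ρ) = m(ρ). -/

import Mathlib

/-!
For a conjugate pair `(χ₁, χ₂)` modulo `π^n` one has `(χ₁ - χ₂)² = tr² - 4 det`, the
discriminant of `ρ`. If the half-trace `χ` is a character modulo `π^k`, then
`tr(g²) = tr(g)² - 2 det(g)` forces `det ≡ χ²`, so `(χ, χ)` is a conjugate pair modulo
`π^k` (whence `k ≤ n`, and `k = n` only if `m = n`) and `π^k` divides the discriminant.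
Halving valuations, every conjugate pair modulo `π^n` then has `χ₁ ≡ χ₂` modulo `π^⌈k/2⌉`,
so `⌈k/2⌉ ≤ m`. Conversely, if `χ₁ ≡ χ₂` modulo `π^m`, then
`2(χ₁ + χ₂)(gh) - (χ₁ + χ₂)(g)(χ₁ + χ₂)(h) = (χ₁ - χ₂)(g)(χ₁ - χ₂)(h)`
vanishes modulo `π^2m`, so `(χ₁ + χ₂)/2` is a character modulo `π^min(2m, n)` and
`min(2m, n) ≤ k`. These inequalities determine `k`.
-/

open Matrix

/-- `(χ₁, χ₂)` is a pair of conjugate characters of `ρ` modulo `π^n`. -/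
def IsConjPair {O : Type*} [CommRing O] {G : Type*} [Group G] (π : O) (n : ℕ)
    (ρ : G →* GL (Fin 2) O) (χ₁ χ₂ : G →* (O ⧸ Ideal.span {π ^ n})ˣ) : Prop :=
  ∀ g : G,
    Ideal.Quotient.mk (Ideal.span {π ^ n})
      (Matrix.trace (ρ g : Matrix (Fin 2) (Fin 2) O)) = (χ₁ g : O ⧸ Ideal.span {π ^ n}) + χ₂ g
    ∧ Ideal.Quotient.mk (Ideal.span {π ^ n})
      (Matrix.det (ρ g : Matrix (Fin 2) (Fin 2) O)) = (χ₁ g : O ⧸ Ideal.span {π ^ n}) * χ₂ g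

/-- The map `g ↦ (trace ρ(g))/2 mod π^k` is a multiplicative character of `G`. -/
def IsHalfTraceMultiplicative {O : Type*} [CommRing O] {G : Type*} [Group G] (π : O) (k : ℕ)
    (ρ : G →* GL (Fin 2) O) : Prop :=
  ∃ χ : G →* (O ⧸ Ideal.span {π ^ k})ˣ,
    ∀ g : G, 2 * (χ g : O ⧸ Ideal.span {π ^ k})
      = Ideal.Quotient.mk (Ideal.span {π ^ k}) (Matrix.trace (ρ g : Matrix (Fin 2) (Fin 2) O))

theorem Prime.pow_dvd_of_pow_dvd_sq {α : Type*} [CommMonoidWithZero α] [IsCancelMulZero α]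
    {p x : α} (hp : Prime p) {k : ℕ} (h : p ^ k ∣ x ^ 2) : p ^ ((k + 1) / 2) ∣ x := by
  rw [pow_dvd_iff_le_emultiplicity, emultiplicity_pow hp] at h
  rw [pow_dvd_iff_le_emultiplicity]
  cases e : emultiplicity p x with
  | top => exact le_top
  | coe v =>
    rw [e] at h
    norm_cast at h ⊢
    omega

theorem Matrix.trace_mul_self_fin_two {R : Type*} [CommRing R] (A : Matrix (Fin 2) (Fin 2) R) :
    trace (A * A) = trace A ^ 2 - 2 * det A := by
  simp only [trace_fin_two, det_fin_two, mul_apply, Fin.sum_univ_two]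
  ring

theorem exists_two_mul_eq_add_of_mul_sub_eq_zero {R G : Type*} [CommRing R] [Group G]
    (h2 : IsUnit (2 : R)) (χ₁ χ₂ : G →* Rˣ)
    (hδ : ∀ g h, ((χ₁ g : R) - χ₂ g) * ((χ₁ h : R) - χ₂ h) = 0) :
    ∃ χ : G →* Rˣ, ∀ g, 2 * (χ g : R) = χ₁ g + χ₂ g := by
  obtain ⟨u, hu⟩ := h2
  let c : R := ↑u⁻¹
  have hc : c * 2 = 1 := by rw [← hu]; exact u.inv_mul
  let χ : G →* R :=
    { toFun := fun g => c * (χ₁ g + χ₂ g)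
      map_one' := by simp [one_add_one_eq_two, hc]
      map_mul' := fun g h => by
        simp only [map_mul, Units.val_mul]
        linear_combination
          (-(c * (χ₁ g * χ₁ h + χ₂ g * χ₂ h : R))) * hc + c ^ 2 * hδ g h }
  exact ⟨χ.toHomUnits, fun g => by simp [χ, ← mul_assoc, mul_comm 2 c, hc]⟩

section Quotient

variable {O G : Type*} [CommRing O] [Group G] {ρ : G →* GL (Fin 2) O}

open Ideal.Quotient

theorem det_eq_mul_self_of_two_mul_eq_trace {I : Ideal O} (h2 : IsUnit (2 : O ⧸ I))
    {χ : G →* (O ⧸ I)ˣ} (hχ : ∀ g, 2 * (χ g : O ⧸ I) = mk I (ρ g).val.trace)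
    (g : G) : mk I (ρ g).val.det = χ g * χ g := by
  have hsq := hχ (g * g)
  simp only [map_mul, Units.val_mul, trace_mul_self_fin_two, map_sub, map_pow, map_ofNat]
    at hsq
  apply h2.mul_left_cancel
  linear_combination hsq - (2 * (χ g : O ⧸ I) + mk I (ρ g).val.trace) * hχ g

variable {π : O}

theorem sub_sq_eq_discr_of_isConjPair {n : ℕ} {χ₁ χ₂ : G →* (O ⧸ Ideal.span {π ^ n})ˣ}
    (hp : IsConjPair π n ρ χ₁ χ₂) (g : G) :
    ((χ₁ g).val - (χ₂ g).val) ^ 2 = mk _ (ρ g).val.discr := by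
  rw [discr_fin_two, map_sub, map_pow, map_mul, map_ofNat, (hp g).1, (hp g).2]
  ring

theorem IsHalfTraceMultiplicative.exists_isConjPair_self (h2 : IsUnit (2 : O)) {k : ℕ}
    (hk : IsHalfTraceMultiplicative π k ρ) : ∃ χ, IsConjPair π k ρ χ χ := by
  obtain ⟨χ, hχ⟩ := hk
  have h2' : IsUnit (2 : O ⧸ Ideal.span {π ^ k}) := by
    rw [← map_ofNat (mk _) 2]; exact h2.map _
  exact ⟨χ, fun g =>
    ⟨by rw [← hχ g, two_mul], det_eq_mul_self_of_two_mul_eq_trace h2' hχ g⟩⟩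

theorem IsHalfTraceMultiplicative.pow_dvd_discr (h2 : IsUnit (2 : O)) {k : ℕ}
    (hk : IsHalfTraceMultiplicative π k ρ) (g : G) : π ^ k ∣ (ρ g).val.discr := by
  obtain ⟨χ, hχχ⟩ := hk.exists_isConjPair_self h2
  rw [← Ideal.mem_span_singleton, ← eq_zero_iff_mem, ← sub_sq_eq_discr_of_isConjPair hχχ g]
  ring

theorem pow_dvd_sub_of_isConjPair_of_pow_dvd_discr [IsDomain O] (hπ : Prime π) {n k : ℕ}
    (hkn : k ≤ n) {χ₁ χ₂ : G →* (O ⧸ Ideal.span {π ^ n})ˣ}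
    (hp : IsConjPair π n ρ χ₁ χ₂)
    (hd : ∀ g, π ^ k ∣ (ρ g).val.discr) (g : G) :
    mk _ π ^ ((k + 1) / 2) ∣ (χ₁ g).val - (χ₂ g).val := by
  obtain ⟨x, hx⟩ := mk_surjective ((χ₁ g).val - (χ₂ g).val)
  have hxn : π ^ n ∣ x ^ 2 - (ρ g).val.discr := by
    rw [← Ideal.mem_span_singleton, ← eq_zero_iff_mem, map_sub, map_pow, hx,
      sub_sq_eq_discr_of_isConjPair hp, sub_self]
  have hxk : π ^ k ∣ x ^ 2 := (dvd_sub_left (hd g)).mp ((pow_dvd_pow π hkn).trans hxn)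
  obtain ⟨y, rfl⟩ := hπ.pow_dvd_of_pow_dvd_sq hxk
  exact ⟨mk _ y, by rw [← hx, map_mul, map_pow]⟩

theorem isHalfTraceMultiplicative_of_isConjPair (h2 : IsUnit (2 : O)) {n m s : ℕ}
    (hs2 : s ≤ 2 * m) (hsn : s ≤ n) {χ₁ χ₂ : G →* (O ⧸ Ideal.span {π ^ n})ˣ}
    (hp : IsConjPair π n ρ χ₁ χ₂)
    (hd : ∀ g, mk _ π ^ m ∣ (χ₁ g).val - (χ₂ g).val) :
    IsHalfTraceMultiplicative π s ρ := by
  have hle : Ideal.span {π ^ n} ≤ Ideal.span {π ^ s} :=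
    Ideal.span_singleton_le_span_singleton.mpr (pow_dvd_pow π hsn)
  let e := factor hle
  have hπ2m : e (mk _ π) ^ (2 * m) = 0 := by
    rw [factor_mk, ← map_pow, eq_zero_iff_mem, Ideal.mem_span_singleton]
    exact pow_dvd_pow π hs2
  have hδ : ∀ g h, (e (χ₁ g) - e (χ₂ g)) * (e (χ₁ h) - e (χ₂ h)) = 0 := by
    intro g h
    obtain ⟨a, ha⟩ := hd g
    obtain ⟨b, hb⟩ := hd h
    rw [← map_sub, ← map_sub, ha, hb, map_mul, map_mul, map_pow]
    linear_combination e a * e b * hπ2m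
  have h2' : IsUnit (2 : O ⧸ Ideal.span {π ^ s}) := by
    rw [← map_ofNat (mk _) 2]; exact h2.map _
  obtain ⟨χ, hχ⟩ := exists_two_mul_eq_add_of_mul_sub_eq_zero h2'
    ((Units.map e.toMonoidHom).comp χ₁) ((Units.map e.toMonoidHom).comp χ₂) hδ
  refine ⟨χ, fun g => ?_⟩
  rw [hχ g]
  change e _ + e _ = _
  rw [← map_add, ← (hp g).1, factor_mk]

end Quotient

theorem k_rho_eq_general
    {O : Type*} [CommRing O] [IsDomain O] [IsDiscreteValuationRing O]
    (π : O) (hπ : Irreducible π) (h2 : IsUnit (2 : O))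
    {G : Type*} [Group G]
    (ρ : G →* GL (Fin 2) O)
    (n : ℕ)
    (hn_max : ∀ n' : ℕ,
      (∃ χ₁ χ₂ : G →* (O ⧸ Ideal.span {π ^ n'})ˣ, IsConjPair π n' ρ χ₁ χ₂) → n' ≤ n)
    (m : ℕ) (hm_le : m ≤ n)
    (hm_ex : ∃ χ₁ χ₂ : G →* (O ⧸ Ideal.span {π ^ n})ˣ, IsConjPair π n ρ χ₁ χ₂
      ∧ ∀ g : G, (Ideal.Quotient.mk (Ideal.span {π ^ n}) π) ^ m ∣
          ((χ₁ g : O ⧸ Ideal.span {π ^ n}) - χ₂ g))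
    (hm_max : ∀ j ≤ n,
      (∃ χ₁ χ₂ : G →* (O ⧸ Ideal.span {π ^ n})ˣ, IsConjPair π n ρ χ₁ χ₂
        ∧ ∀ g : G, (Ideal.Quotient.mk (Ideal.span {π ^ n}) π) ^ j ∣
            ((χ₁ g : O ⧸ Ideal.span {π ^ n}) - χ₂ g)) → j ≤ m)
    (k : ℕ)
    (hk : IsHalfTraceMultiplicative π k ρ)
    (hk_max : ∀ k' : ℕ, IsHalfTraceMultiplicative π k' ρ → k' ≤ k) :
    (m ≠ n → k = 2 * m) ∧ (m = n → k = m) := by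
  obtain ⟨χ₁, χ₂, hpair, hdvd⟩ := hm_ex
  obtain ⟨χ, hχχ⟩ := hk.exists_isConjPair_self h2
  have hkn : k ≤ n := hn_max k ⟨χ, χ, hχχ⟩
  have h2m : min (2 * m) n ≤ k :=
    hk_max _ <|
      isHalfTraceMultiplicative_of_isConjPair h2 (min_le_left _ _) (min_le_right _ _) hpair hdvd
  have hkm : (k + 1) / 2 ≤ m := hm_max _ (by omega) ⟨χ₁, χ₂, hpair,
    pow_dvd_sub_of_isConjPair_of_pow_dvd_discr hπ.prime hkn hpair (hk.pow_dvd_discr h2)⟩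
  have hm_eq_of_k_eq : k = n → m = n := by
    rintro rfl
    exact le_antisymm hm_le (hm_max k le_rfl ⟨χ, χ, hχχ, fun g => by simp⟩)
  refine ⟨fun hmn => ?_, fun _ => by omega⟩
  have := mt hm_eq_of_k_eq hmn
  omega

/-- Relation between `k(ρ)`, `m(ρ)` and `n(ρ)`: if `m(ρ) ≠ n(ρ)` then `k(ρ) = 2 m(ρ)`,
and if `m(ρ) = n(ρ)` then `k(ρ) = m(ρ)`. -/
theorem k_rho_eq
    {O : Type*} [CommRing O] [IsDomain O] [IsDiscreteValuationRing O]
    (π : O) (hπ : Irreducible π) (h2 : IsUnit (2 : O))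
    {G : Type*} [Group G]
    (ρ : G →* GL (Fin 2) O)
    (n : ℕ)
    (hn_ex : ∃ χ₁ χ₂ : G →* (O ⧸ Ideal.span {π ^ n})ˣ, IsConjPair π n ρ χ₁ χ₂)
    (hn_max : ∀ n' : ℕ,
      (∃ χ₁ χ₂ : G →* (O ⧸ Ideal.span {π ^ n'})ˣ, IsConjPair π n' ρ χ₁ χ₂) → n' ≤ n)
    (m : ℕ) (hm_le : m ≤ n)
    (hm_ex : ∃ χ₁ χ₂ : G →* (O ⧸ Ideal.span {π ^ n})ˣ, IsConjPair π n ρ χ₁ χ₂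
      ∧ ∀ g : G, (Ideal.Quotient.mk (Ideal.span {π ^ n}) π) ^ m ∣
          ((χ₁ g : O ⧸ Ideal.span {π ^ n}) - χ₂ g))
    (hm_max : ∀ j ≤ n,
      (∃ χ₁ χ₂ : G →* (O ⧸ Ideal.span {π ^ n})ˣ, IsConjPair π n ρ χ₁ χ₂
        ∧ ∀ g : G, (Ideal.Quotient.mk (Ideal.span {π ^ n}) π) ^ j ∣
            ((χ₁ g : O ⧸ Ideal.span {π ^ n}) - χ₂ g)) → j ≤ m)
    (k : ℕ)
    (hk : IsHalfTraceMultiplicative π k ρ)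
    (hk_max : ∀ k' : ℕ, IsHalfTraceMultiplicative π k' ρ → k' ≤ k) :
    (m ≠ n → k = 2 * m) ∧ (m = n → k = m) :=
  k_rho_eq_general π hπ h2 ρ n hn_max m hm_le hm_ex hm_max k hk hk_max
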